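/- Let G_c be the universal comparison graph of the lattice graph (ℤ², ℓ¹) and identify the vertices of ℤ² with ℕ_{≥1} via the spiral labelling. For every edge e of G_c, there are at most 16 edges (i, j) of the lattice graph (with spiral labels i < j) such that e lies on the path Ψ(i,j). -/

import Mathlib

open scoped ENNReal Classical

noncomputable section

/-- A function on a countable vertex set *vanishes at infinity* if every
super-level set `{x : t < |f x|}` with `t > 0` is finite. -/
def VanishesAtInfinity {V : Type*} (f : V → ℝ) : Prop :=
  ∀ t : ℝ, 0 < t → {x : V | t < |f x|}.Finite

/-- The `k`-th largest value (k ≥ 1, counted with multiplicity) assumed by `|f|`. -/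
def kthLargest {V : Type*} (f : V → ℝ) (k : ℕ) : ℝ :=
  sInf {t : ℝ | 0 ≤ t ∧ {x : V | t < |f x|}.Finite ∧ {x : V | t < |f x|}.ncard < k}

/-- The rearrangement of `f` with respect to the labelling `η`, where `η n` is the
vertex carrying label `n + 1`:  `f*(η (k-1)) = k`-th largest value of `|f|`. -/
def rearrangementOf {V : Type*} (η : ℕ → V) (f : V → ℝ) : V → ℝ :=
  fun v => kthLargest f (Function.invFun η v + 1)

/-- `‖∇f‖_p^p = Σ_{x∼y} |f x - f y|^p`, each edge counted once (value in `ℝ≥0∞`). -/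
def gradPPow {V : Type*} (G : SimpleGraph V) (f : V → ℝ) (p : ℝ) : ℝ≥0∞ :=
  ∑' e : G.edgeSet, Sym2.lift
    ⟨fun x y => ENNReal.ofReal (|f x - f y| ^ p), fun x y => by dsimp only; rw [abs_sub_comm]⟩
    (e : Sym2 V)

/-- `‖∇f‖_p = (Σ_{x∼y} |f x - f y|^p)^{1/p}` (value in `ℝ≥0∞`). -/
def gradP {V : Type*} (G : SimpleGraph V) (f : V → ℝ) (p : ℝ) : ℝ≥0∞ :=
  gradPPow G f p ^ (1 / p)

/-- `‖∇f‖_∞ = sup_{x∼y} |f x - f y|` (value in `ℝ≥0∞`). -/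
def gradTop {V : Type*} (G : SimpleGraph V) (f : V → ℝ) : ℝ≥0∞ :=
  ⨆ e : G.edgeSet, Sym2.lift
    ⟨fun x y => ENNReal.ofReal |f x - f y|, fun x y => by dsimp only; rw [abs_sub_comm]⟩
    (e : Sym2 V)

/-- The vertex boundary `∂_V(X)` of a set of vertices. -/
def vertexBoundary {V : Type*} (G : SimpleGraph V) (X : Set V) : Set V :=
  {z : V | z ∉ X ∧ ∃ x ∈ X, G.Adj z x}

/-- The isoperimetric number `∂_V^n`: the least vertex-perimeter among sets of `n` vertices. -/
def isoNum {V : Type*} (G : SimpleGraph V) (n : ℕ) : ℕ :=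
  sInf {m : ℕ | ∃ X : Set V, X.Finite ∧ X.ncard = n ∧
    (vertexBoundary G X).Finite ∧ (vertexBoundary G X).ncard = m}

/-- `∂_V^n` with the convention `∂_V^0 = 1`. -/
def isoNum₀ {V : Type*} (G : SimpleGraph V) (n : ℕ) : ℕ :=
  if n = 0 then 1 else isoNum G n

/-- `b` is a neighbour of `a` larger than `a` in the universal comparison graph:
`(a-1) + ∂_V^{a-1} < b ≤ a + ∂_V^a`. -/
def cAdj {V : Type*} (G : SimpleGraph V) (a b : ℕ+) : Prop :=
  a < b ∧ (a : ℕ) - 1 + isoNum₀ G ((a : ℕ) - 1) < (b : ℕ) ∧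
    (b : ℕ) ≤ (a : ℕ) + isoNum G (a : ℕ)

/-- The universal comparison graph `G_c` of `G`, a graph on the positive integers. -/
def comparisonGraph {V : Type*} (G : SimpleGraph V) : SimpleGraph ℕ+ where
  Adj a b := cAdj G a b ∨ cAdj G b a
  symm := ⟨fun a b h => h.symm⟩
  loopless := ⟨fun a h => by
    rcases h with h | h <;> exact absurd h.1 (lt_irrefl a)⟩

/-- The lattice graph `(ℤ², ℓ¹)`. -/
def latticeZ2 : SimpleGraph (ℤ × ℤ) where
  Adj x y := |x.1 - y.1| + |x.2 - y.2| = 1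
  symm := by
    constructor
    intro x y h
    rw [abs_sub_comm y.1 x.1, abs_sub_comm y.2 x.2]
    exact h
  loopless := by constructor; intro x h; simp at h

/-- The lattice graph `(ℤ^d, ℓ¹)`. -/
def latticeZd (d : ℕ) : SimpleGraph (Fin d → ℤ) where
  Adj x y := (∑ i, |x i - y i|) = 1
  symm := by
    constructor
    intro x y h
    have : ∀ i, |y i - x i| = |x i - y i| := fun i => abs_sub_comm _ _
    simpa [this] using h
  loopless := by constructor; intro x h; simp at h

/-- `ℓ¹`-norm on `ℤ²`. -/
def l1 (x : ℤ × ℤ) : ℤ := |x.1| + |x.2|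

/-- One step of the counterclockwise square spiral on `ℤ²`. -/
def spiralNext : ℤ × ℤ → ℤ × ℤ := fun p =>
  if p.1 = 0 ∧ p.2 = 0 then (1, 0)
  else if p.2 < 0 ∧ |p.1| ≤ -p.2 then (p.1 + 1, p.2)
  else if 0 < p.1 ∧ |p.2| < p.1 then (p.1, p.2 + 1)
  else if 0 < p.2 ∧ p.1 ≤ p.2 ∧ -p.1 < p.2 then (p.1 - 1, p.2)
  else (p.1, p.2 - 1)
/-- The spiral labelling of `ℤ²` (0-indexed): `spiral (k-1)` is the vertex with
spiral label `k`, so `spiral 0 = (0,0)`, `spiral 1 = (1,0)`, `spiral 2 = (1,1)`, … -/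
def spiral : ℕ → ℤ × ℤ := fun n => spiralNext^[n] (0, 0)

/-- The universal comparison graph of the lattice graph `(ℤ², ℓ¹)`. -/
def GcZ2 : SimpleGraph ℕ+ := comparisonGraph latticeZ2

/-- `i` lies on the path from `1` to `k` in the tree `G_c`. -/
def liesOnPathFromOne (i k : ℕ+) : Prop :=
  GcZ2.dist 1 i + GcZ2.dist i k = GcZ2.dist 1 k

/-- The edge `{a, b}` of `G_c` lies on the (unique shortest) path in the tree `G_c`
from `i` to `k`. -/
def edgeOnPath (i k a b : ℕ+) : Prop :=
  GcZ2.Adj a b ∧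
    (GcZ2.dist i a + 1 + GcZ2.dist b k = GcZ2.dist i k ∨
     GcZ2.dist i b + 1 + GcZ2.dist a k = GcZ2.dist i k)

/-!
In `G_c` the children of `n` are the labels in `(maxChild (n - 1), maxChild n]`, where
`maxChild n = n + ∂_V^n`; so `G_c` is a tree rooted at `1`, and `liesOnPathFromOne i k` says
that `i` is an ancestor of `k`. Counting the columns and the rows of a finite `X ⊆ ℤ²` gives
`∂_V^n ≥ 2 √n`, while the spiral labels `i < j` of two lattice neighbours satisfy
`j - i - 1 ≤ 6 √i`. Hence `j ≤ maxChild^[3] i + 1`, and the least descendant `k ≥ j` of `i` lies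
at most four generations below `i`. An edge on `Ψ(i, j)` then has its upper endpoint `x` at most
three generations below `i`, so `i` is determined by `x` and `depth x - depth i < 4`, and `j` by
`i` and one of the four lattice directions: at most `4 · 4 = 16` pairs.
-/

open Function Finset
open scoped Pointwise

def unitSteps : Finset (ℤ × ℤ) := {(1, 0), (-1, 0), (0, 1), (0, -1)}

lemma latticeZ2_adj_iff {p q : ℤ × ℤ} : latticeZ2.Adj p q ↔ q - p ∈ unitSteps := by
  obtain ⟨x, y⟩ := p
  obtain ⟨u, v⟩ := q
  change |x - u| + |y - v| = 1 ↔ _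
  simp only [unitSteps, Prod.mk_sub_mk, mem_insert, mem_singleton, Prod.mk.injEq]
  rcases abs_cases (x - u) with ⟨h₁, h₁'⟩ | ⟨h₁, h₁'⟩ <;>
    rcases abs_cases (y - v) with ⟨h₂, h₂'⟩ | ⟨h₂, h₂'⟩ <;> omega

lemma vertexBoundary_latticeZ2_subset (X : Set (ℤ × ℤ)) :
    vertexBoundary latticeZ2 X ⊆ X + (unitSteps : Set (ℤ × ℤ)) := by
  rintro z ⟨-, x, hx, hzx⟩
  exact ⟨x, hx, z - x, latticeZ2_adj_iff.1 hzx.symm, add_sub_cancel x z⟩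

lemma vertexBoundary_latticeZ2_finite {X : Set (ℤ × ℤ)} (hX : X.Finite) :
    (vertexBoundary latticeZ2 X).Finite :=
  (hX.add unitSteps.finite_toSet).subset (vertexBoundary_latticeZ2_subset X)

lemma vertexBoundary_image_iso {V W : Type*} {G : SimpleGraph V} {G' : SimpleGraph W}
    (e : G ≃g G') (X : Set V) : vertexBoundary G' (e '' X) = e '' vertexBoundary G X := by
  ext z
  obtain ⟨z, rfl⟩ := e.surjective z
  simp only [vertexBoundary, Set.mem_ofPred_eq, Set.mem_image, e.injective.eq_iff,
    exists_eq_right, exists_exists_and_eq_and, e.map_adj_iff]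

def latticeZ2SwapIso : latticeZ2 ≃g latticeZ2 where
  toEquiv := Equiv.prodComm ℤ ℤ
  map_rel_iff' {p q} := by
    change |p.2 - q.2| + |p.1 - q.1| = 1 ↔ |p.1 - q.1| + |p.2 - q.2| = 1
    rw [add_comm]

lemma two_le_card_vertexBoundary_filter_fst (X B : Finset (ℤ × ℤ))
    (hB : ↑B = vertexBoundary latticeZ2 X) {c : ℤ} (hc : c ∈ X.image Prod.fst) :
    2 ≤ #{b ∈ B | b.1 = c} := by
  set s := {p ∈ X | p.1 = c}.image Prod.snd
  have hs : s.Nonempty := by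
    obtain ⟨p, hp, rfl⟩ := mem_image.1 hc
    exact ⟨p.2, mem_image.2 ⟨p, mem_filter.2 ⟨hp, rfl⟩, rfl⟩⟩
  have mem_s : ∀ y, y ∈ s ↔ (c, y) ∈ X := fun y => by simp [s]
  have mem_B : ∀ y, (c, y) ∉ X → (c, y + 1) ∈ X ∨ (c, y - 1) ∈ X → (c, y) ∈ B := by
    intro y hy hnb
    rw [← mem_coe, hB]
    refine ⟨hy, ?_⟩
    rcases hnb with h | h <;> exact ⟨_, h, latticeZ2_adj_iff.2 (by simp [unitSteps])⟩
  have top : (c, s.max' hs + 1) ∈ B := mem_B _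
    (fun h => by linarith [s.le_max' _ ((mem_s _).2 h)])
    (Or.inr (by simpa [← mem_s] using s.max'_mem hs))
  have bot : (c, s.min' hs - 1) ∈ B := mem_B _
    (fun h => by linarith [s.min'_le _ ((mem_s _).2 h)])
    (Or.inl (by simpa [← mem_s] using s.min'_mem hs))
  refine one_lt_card.2 ⟨_, mem_filter.2 ⟨top, rfl⟩, _,
    mem_filter.2 ⟨bot, rfl⟩, fun h => ?_⟩
  have := s.min'_le_max' hs
  simp only [Prod.mk.injEq] at h
  omega

lemma two_mul_ncard_image_fst_le {X : Set (ℤ × ℤ)} (hX : X.Finite) :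
    2 * (Prod.fst '' X).ncard ≤ (vertexBoundary latticeZ2 X).ncard := by
  lift X to Finset (ℤ × ℤ) using hX
  obtain ⟨B, hB⟩ := (vertexBoundary_latticeZ2_finite X.finite_toSet).exists_finset_coe
  rw [← coe_image, Set.ncard_coe_finset, ← hB, Set.ncard_coe_finset]
  calc 2 * #(X.image Prod.fst)
      = ∑ c ∈ X.image Prod.fst, 2 := by rw [sum_const, smul_eq_mul, mul_comm]
    _ ≤ ∑ c ∈ X.image Prod.fst, #{b ∈ B | b.1 = c} :=
        sum_le_sum fun c hc => two_le_card_vertexBoundary_filter_fst X B hB hc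
    _ = #{b ∈ B | b.1 ∈ X.image Prod.fst} := sum_card_fiberwise_eq_card_filter _ _ _
    _ ≤ #B := card_filter_le _ _

lemma two_mul_ncard_image_snd_le {X : Set (ℤ × ℤ)} (hX : X.Finite) :
    2 * (Prod.snd '' X).ncard ≤ (vertexBoundary latticeZ2 X).ncard := by
  have h := two_mul_ncard_image_fst_le (hX.image latticeZ2SwapIso)
  rwa [vertexBoundary_image_iso, Set.ncard_image_of_injective _ latticeZ2SwapIso.injective,
    Set.image_image] at h

lemma exists_isoNum_latticeZ2_eq (n : ℕ) : ∃ X : Set (ℤ × ℤ), X.Finite ∧ X.ncard = n ∧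
    (vertexBoundary latticeZ2 X).ncard = isoNum latticeZ2 n := by
  have hne : {m : ℕ | ∃ X : Set (ℤ × ℤ), X.Finite ∧ X.ncard = n ∧
      (vertexBoundary latticeZ2 X).Finite ∧ (vertexBoundary latticeZ2 X).ncard = m}.Nonempty := by
    have hX : ((fun k : ℕ => ((k : ℤ), (0 : ℤ))) '' Set.Iio n).Finite :=
      (Set.finite_Iio n).image _
    refine ⟨_, _, hX, ?_, vertexBoundary_latticeZ2_finite hX, rfl⟩
    rw [Set.ncard_image_of_injective _ fun k l h => by simpa using h, Set.ncard_eq_toFinset_card',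
      Set.toFinset_Iio, Nat.card_Iio]
  obtain ⟨X, hX, hXn, -, hXb⟩ := Nat.sInf_mem hne
  exact ⟨X, hX, hXn, hXb⟩

lemma isoNum_latticeZ2_le {X : Set (ℤ × ℤ)} (hX : X.Finite) :
    isoNum latticeZ2 X.ncard ≤ (vertexBoundary latticeZ2 X).ncard :=
  Nat.sInf_le ⟨X, hX, rfl, vertexBoundary_latticeZ2_finite hX, rfl⟩

lemma four_mul_le_isoNum_latticeZ2_sq (n : ℕ) : 4 * n ≤ isoNum latticeZ2 n ^ 2 := by
  obtain ⟨X, hX, rfl, hXb⟩ := exists_isoNum_latticeZ2_eq n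
  have hcols := two_mul_ncard_image_fst_le hX
  have hrows := two_mul_ncard_image_snd_le hX
  have hprod : X.ncard ≤ (Prod.fst '' X).ncard * (Prod.snd '' X).ncard := by
    rw [← Set.ncard_prod]
    exact Set.ncard_le_ncard (fun p hp => ⟨⟨p, hp, rfl⟩, ⟨p, hp, rfl⟩⟩)
      ((hX.image _).prod (hX.image _))
  rw [hXb] at hcols hrows
  nlinarith

lemma isoNum_latticeZ2_le_succ_add_one (n : ℕ) :
    isoNum latticeZ2 n ≤ isoNum latticeZ2 (n + 1) + 1 := by
  obtain ⟨X, hX, hXn, hXb⟩ := exists_isoNum_latticeZ2_eq (n + 1)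
  obtain ⟨x, hx⟩ : X.Nonempty := Set.nonempty_of_ncard_ne_zero (by omega)
  have hsub : vertexBoundary latticeZ2 (X \ {x}) ⊆ insert x (vertexBoundary latticeZ2 X) := by
    rintro z ⟨hz, w, hw, hzw⟩
    by_cases hzx : z = x
    · exact Or.inl hzx
    · exact Or.inr ⟨fun h => hz ⟨h, hzx⟩, w, hw.1, hzw⟩
  calc isoNum latticeZ2 n = isoNum latticeZ2 (X \ {x}).ncard := by
        rw [Set.ncard_sdiff_singleton_of_mem hx, hXn, Nat.add_sub_cancel]
    _ ≤ (vertexBoundary latticeZ2 (X \ {x})).ncard := isoNum_latticeZ2_le hX.sdiff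
    _ ≤ (insert x (vertexBoundary latticeZ2 X)).ncard :=
        Set.ncard_le_ncard hsub ((vertexBoundary_latticeZ2_finite hX).insert x)
    _ ≤ isoNum latticeZ2 (n + 1) + 1 := hXb ▸ Set.ncard_insert_le _ _

lemma two_le_isoNum_latticeZ2 {n : ℕ} (hn : 1 ≤ n) : 2 ≤ isoNum latticeZ2 n := by
  have h := four_mul_le_isoNum_latticeZ2_sq n
  by_contra! h'
  interval_cases isoNum latticeZ2 n <;> omega

/-- The ring `max |x| |y| = r ≥ 1` carries the labels `(2r-1)^2, …, (2r+1)^2 - 1` (0-indexed),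
starting just above `(r, -r)` and running counterclockwise. -/
def spiralIndex (p : ℤ × ℤ) : ℤ :=
  if 0 < p.1 ∧ -p.1 < p.2 ∧ p.2 ≤ p.1 then (2 * p.1 - 1) ^ 2 + p.1 + p.2 - 1
  else if 0 < p.2 ∧ -p.2 ≤ p.1 ∧ p.1 < p.2 then (2 * p.2 - 1) ^ 2 + 3 * p.2 - 1 - p.1
  else if p.1 < 0 ∧ p.1 < p.2 ∧ p.2 < -p.1 then (2 * p.1 + 1) ^ 2 - 5 * p.1 - 1 - p.2
  else if p.2 < 0 ∧ p.2 ≤ p.1 ∧ p.1 ≤ -p.2 then (2 * p.2 + 1) ^ 2 - 7 * p.2 - 1 + p.1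
  else 0

section SpiralIndex

variable {x y : ℤ}

lemma spiralIndex_right (hx : 0 < x) (h₁ : -x < y) (h₂ : y ≤ x) :
    spiralIndex (x, y) = (2 * x - 1) ^ 2 + x + y - 1 := by
  simp only [spiralIndex, if_pos (⟨hx, h₁, h₂⟩ : 0 < x ∧ -x < y ∧ y ≤ x)]

lemma spiralIndex_top (hy : 0 < y) (h₁ : -y ≤ x) (h₂ : x ≤ y) :
    spiralIndex (x, y) = (2 * y - 1) ^ 2 + 3 * y - 1 - x := by
  rcases h₂.lt_or_eq with h₂ | rfl
  · simp only [spiralIndex]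
    rw [if_neg (by omega), if_pos ⟨hy, h₁, h₂⟩]
  · rw [spiralIndex_right hy (by omega) le_rfl]; ring

lemma spiralIndex_left (hx : x < 0) (h₁ : x ≤ y) (h₂ : y ≤ -x) :
    spiralIndex (x, y) = (2 * x + 1) ^ 2 - 5 * x - 1 - y := by
  rcases h₁.lt_or_eq with h₁ | rfl
  · rcases h₂.lt_or_eq with h₂ | rfl
    · simp only [spiralIndex]
      rw [if_neg (by omega), if_neg (by omega), if_pos ⟨hx, h₁, h₂⟩]
    · rw [spiralIndex_top (by omega) (by omega) (by omega)]; ring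
  · simp only [spiralIndex]
    rw [if_neg (by omega), if_neg (by omega), if_neg (by omega), if_pos ⟨hx, le_rfl, by omega⟩]
    ring

lemma spiralIndex_bottom (hy : y < 0) (h₁ : y ≤ x) (h₂ : x ≤ -y) :
    spiralIndex (x, y) = (2 * y + 1) ^ 2 - 7 * y - 1 + x := by
  simp only [spiralIndex]
  rw [if_neg (by omega), if_neg (by omega), if_neg (by omega), if_pos ⟨hy, h₁, h₂⟩]

end SpiralIndex

lemma spiralIndex_spiralNext (p : ℤ × ℤ) : spiralIndex (spiralNext p) = spiralIndex p + 1 := by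
  obtain ⟨x, y⟩ := p
  simp only [spiralNext, abs_le, abs_lt]
  split_ifs with h₀ hB hR hT
  · obtain ⟨rfl, rfl⟩ := h₀
    decide
  · rw [spiralIndex_bottom hB.1 (by omega) hB.2.2]
    rcases hB.2.2.lt_or_eq with hx | rfl
    · rw [spiralIndex_bottom (x := x + 1) hB.1 (by omega) hx]; ring
    · rw [spiralIndex_right (x := -y + 1) (by omega) (by omega) (by omega)]; ring
  · rw [spiralIndex_right hR.1 hR.2.1 hR.2.2.le,
      spiralIndex_right (y := y + 1) hR.1 (by omega) hR.2.2]
    ring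
  · rw [spiralIndex_top hT.1 (by omega) hT.2.1,
      spiralIndex_top (x := x - 1) hT.1 (by omega) (by omega)]
    ring
  · rw [spiralIndex_left (x := x) (y := y) (by omega) (by omega) (by omega),
      spiralIndex_left (y := y - 1) (by omega) (by omega) (by omega)]
    ring

lemma spiralIndex_spiral (n : ℕ) : spiralIndex (spiral n) = n := by
  induction n with
  | zero => decide
  | succ n ih =>
    rw [spiral, iterate_succ_apply', ← spiral, spiralIndex_spiralNext, ih]
    push_cast; ring

lemma spiral_injective : Injective spiral :=
  fun m n h => by exact_mod_cast (spiralIndex_spiral m).symm.trans (h ▸ spiralIndex_spiral n)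

/- On each pair of branches of `spiralIndex` the claim is a polynomial inequality; on the seams
between branches the branch conditions pin `y` to a linear function of `x`. -/
set_option maxHeartbeats 1000000 in
lemma sq_spiralIndex_sub_le {p q : ℤ × ℤ} (hpq : latticeZ2.Adj p q)
    (hlt : spiralIndex p < spiralIndex q) :
    (spiralIndex q - spiralIndex p - 1) ^ 2 ≤ 36 * (spiralIndex p + 1) := by
  obtain ⟨d, hd, rfl⟩ : ∃ d ∈ unitSteps, q = p + d :=
    ⟨q - p, latticeZ2_adj_iff.1 hpq, by abel⟩
  obtain ⟨x, y⟩ := p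
  simp only [unitSteps, mem_insert, mem_singleton] at hd
  rcases hd with rfl | rfl | rfl | rfl <;>
  simp only [spiralIndex, Prod.mk_add_mk, add_zero] at hlt ⊢ <;>
  split_ifs at hlt ⊢ <;> first
    | omega
    | nlinarith
    | (obtain rfl | rfl | rfl | rfl : y = x ∨ y = -x ∨ y = 1 - x ∨ y = x + 1 := by omega) <;>
        nlinarith
    | (obtain ⟨rfl, rfl⟩ : x = 0 ∧ y = 0 := by omega); norm_num

lemma le_add_add_of_sq_le {g A D₁ D₂ D₃ : ℕ} (hg : g ^ 2 ≤ 36 * A) (h₁ : 4 * A ≤ D₁ ^ 2)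
    (h₂ : 4 * A ≤ D₂ ^ 2) (h₃ : 4 * A ≤ D₃ ^ 2) : g ≤ D₁ + D₂ + D₃ := by
  set M := min D₁ (min D₂ D₃)
  have hM : 4 * A ≤ M ^ 2 := by
    rcases (by omega : M = D₁ ∨ M = D₂ ∨ M = D₃) with h | h | h <;> rw [h] <;> assumption
  have : g ≤ 3 * M := (Nat.pow_le_pow_iff_left two_ne_zero).1 (by rw [mul_pow]; omega)
  omega

namespace GcZ2

/-- The children of `n` in `G_c` are the labels in `(maxChild (n - 1), maxChild n]`. -/
def maxChild (m : ℕ) : ℕ := m + isoNum₀ latticeZ2 m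

lemma maxChild_zero : maxChild 0 = 1 := rfl

lemma maxChild_of_pos {m : ℕ} (hm : 1 ≤ m) : maxChild m = m + isoNum latticeZ2 m := by
  rw [maxChild, isoNum₀, if_neg (by omega)]

lemma lt_maxChild (m : ℕ) : m < maxChild m := by
  rcases Nat.eq_zero_or_pos m with rfl | hm
  · simp [maxChild_zero]
  · rw [maxChild_of_pos hm]
    have := two_le_isoNum_latticeZ2 hm
    omega

lemma maxChild_mono : Monotone maxChild := by
  refine monotone_nat_of_le_succ fun m => ?_
  rcases Nat.eq_zero_or_pos m with rfl | hm
  · exact (lt_maxChild 1).le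
  · rw [maxChild_of_pos hm, maxChild_of_pos (by omega)]
    have := isoNum_latticeZ2_le_succ_add_one m
    omega

def parent (b : ℕ) : ℕ := sInf {a | 1 ≤ a ∧ b ≤ maxChild a}

lemma parent_spec (b : ℕ) : 1 ≤ parent b ∧ b ≤ maxChild (parent b) :=
  Nat.sInf_mem (s := {a | 1 ≤ a ∧ b ≤ maxChild a})
    ⟨max b 1, le_max_right _ _, (le_max_left _ _).trans (lt_maxChild _).le⟩

lemma parent_le {a b : ℕ} (ha : 1 ≤ a) (h : b ≤ maxChild a) : parent b ≤ a :=
  Nat.sInf_le ⟨ha, h⟩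

lemma parent_lt {b : ℕ} (hb : 2 ≤ b) : parent b < b := by
  have := lt_maxChild (b - 1)
  have := parent_le (a := b - 1) (b := b) (by omega) (by omega)
  omega

lemma maxChild_parent_sub_one_lt {b : ℕ} (hb : 2 ≤ b) : maxChild (parent b - 1) < b := by
  by_contra! h
  rcases Nat.lt_or_ge (parent b) 2 with hp | hp
  · rw [show parent b - 1 = 0 by omega, maxChild_zero] at h
    omega
  · have := parent_le (by omega) h
    omega

lemma two_le_and_parent_eq_iff {a b : ℕ} (ha : 1 ≤ a) :
    2 ≤ b ∧ parent b = a ↔ maxChild (a - 1) < b ∧ b ≤ maxChild a := by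
  constructor
  · rintro ⟨hb, rfl⟩
    exact ⟨maxChild_parent_sub_one_lt hb, (parent_spec b).2⟩
  · rintro ⟨h₁, h₂⟩
    have := lt_maxChild (a - 1)
    refine ⟨by omega, le_antisymm (parent_le ha h₂) (not_lt.1 fun hlt => ?_)⟩
    have := maxChild_mono (Nat.le_sub_one_of_lt hlt)
    have := (parent_spec b).2
    omega

def depth (b : ℕ) : ℕ :=
  if h : 2 ≤ b then
    have : parent b < b := parent_lt h
    depth (parent b) + 1
  else 0
termination_by b

lemma depth_of_lt_two {b : ℕ} (hb : b < 2) : depth b = 0 := by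
  rw [depth, dif_neg (by omega)]

lemma depth_of_two_le {b : ℕ} (hb : 2 ≤ b) : depth b = depth (parent b) + 1 := by
  rw [depth, dif_pos hb]

lemma two_le_of_depth_pos {b : ℕ} (h : 0 < depth b) : 2 ≤ b := by
  by_contra! hb
  rw [depth_of_lt_two hb] at h
  exact h.false

lemma parent_iterate_depth {b : ℕ} (hb : 1 ≤ b) : parent^[depth b] b = 1 := by
  induction b using Nat.strong_induction_on with
  | _ b ih =>
    rcases Nat.lt_or_ge b 2 with h | h
    · rw [depth_of_lt_two h, iterate_zero_apply]
      omega
    · rw [depth_of_two_le h, iterate_succ_apply]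
      exact ih _ (parent_lt h) (parent_spec b).1

lemma cAdj_latticeZ2_iff (a b : ℕ+) : cAdj latticeZ2 a b ↔ 2 ≤ (b : ℕ) ∧ parent b = a := by
  change (a < b ∧ maxChild (a - 1) < b ∧ (b : ℕ) ≤ a + isoNum latticeZ2 a) ↔ _
  rw [← maxChild_of_pos a.pos, two_le_and_parent_eq_iff a.pos]
  refine ⟨fun h => ⟨h.2.1, h.2.2⟩, fun h => ⟨?_, h⟩⟩
  have := lt_maxChild ((a : ℕ) - 1)
  exact (PNat.coe_lt_coe _ _).1 (by omega)

lemma adj_iff {a b : ℕ+} :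
    GcZ2.Adj a b ↔ (2 ≤ (b : ℕ) ∧ parent b = a) ∨ (2 ≤ (a : ℕ) ∧ parent a = b) :=
  (cAdj_latticeZ2_iff a b).or (cAdj_latticeZ2_iff b a)

lemma exists_adj_parent {b : ℕ+} (hb : 2 ≤ (b : ℕ)) :
    ∃ a : ℕ+, (a : ℕ) = parent b ∧ GcZ2.Adj a b :=
  ⟨⟨parent b, (parent_spec b).1⟩, rfl, adj_iff.2 (Or.inl ⟨hb, rfl⟩)⟩

lemma reachable_one (v : ℕ+) : GcZ2.Reachable 1 v := by
  induction v using PNat.strongInductionOn with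
  | _ v ih =>
    rcases Nat.lt_or_ge (v : ℕ) 2 with hv | hv
    · rw [PNat.coe_eq_one_iff.1 (by have := v.pos; omega : (v : ℕ) = 1)]
    · obtain ⟨u, hu, hadj⟩ := exists_adj_parent hv
      exact (ih u (by rw [← PNat.coe_lt_coe, hu]; exact parent_lt hv)).trans hadj.reachable

lemma preconnected : GcZ2.Preconnected := fun u v => (reachable_one u).symm.trans (reachable_one v)

lemma depth_le_depth_add_length {u v : ℕ+} (W : GcZ2.Walk u v) :
    depth v ≤ depth u + W.length := by
  induction W with
  | nil => simp
  | cons h W ih =>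
    rw [SimpleGraph.Walk.length_cons]
    rcases adj_iff.1 h with ⟨hb, hp⟩ | ⟨ha, hp⟩
    · have := depth_of_two_le hb
      rw [hp] at this
      omega
    · have := depth_of_two_le ha
      rw [hp] at this
      omega

lemma depth_le_depth_add_dist (u v : ℕ+) : depth v ≤ depth u + GcZ2.dist u v := by
  obtain ⟨W, hW⟩ := (preconnected u v).exists_walk_length_eq_dist
  exact hW ▸ depth_le_depth_add_length W

/-- The depth condition rules out the junk loop `parent 1 = 1`. -/
def IsAncestor (i k : ℕ) : Prop := ∃ d, parent^[d] k = i ∧ depth i + d = depth k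

lemma isAncestor_of_length {u v : ℕ+} (W : GcZ2.Walk u v)
    (h : depth u + W.length = depth v) : IsAncestor u v := by
  induction W with
  | nil => exact ⟨0, rfl, by simp⟩
  | @cons u w v hadj W ih =>
    rw [SimpleGraph.Walk.length_cons] at h
    rcases adj_iff.1 hadj with ⟨hw, hp⟩ | ⟨hu, hp⟩
    · have := depth_of_two_le hw
      rw [hp] at this
      obtain ⟨d, hd, hdepth⟩ := ih (by omega)
      exact ⟨d + 1, by rw [iterate_succ_apply', hd, hp], by omega⟩
    · have := depth_of_two_le hu
      rw [hp] at this
      have := depth_le_depth_add_length W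
      omega

lemma exists_walk_of_isAncestor {i k : ℕ+} (h : IsAncestor i k) :
    ∃ W : GcZ2.Walk i k, depth i + W.length = depth k := by
  obtain ⟨d, hd, hdepth⟩ := h
  induction d generalizing k with
  | zero =>
    obtain rfl : k = i := PNat.coe_injective hd
    exact ⟨.nil, by simp⟩
  | succ d ih =>
    have hk := two_le_of_depth_pos (show 0 < depth k by omega)
    obtain ⟨u, hu, hadj⟩ := exists_adj_parent hk
    have := depth_of_two_le hk
    rw [← hu] at this
    obtain ⟨W, hW⟩ := ih (k := u) (by rwa [hu, ← iterate_succ_apply]) (by omega)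
    exact ⟨W.concat hadj, by rw [SimpleGraph.Walk.length_concat]; omega⟩

lemma depth_add_dist_of_isAncestor {i k : ℕ+} (h : IsAncestor i k) :
    depth i + GcZ2.dist i k = depth k := by
  obtain ⟨W, hW⟩ := exists_walk_of_isAncestor h
  have := SimpleGraph.dist_le W
  have := depth_le_depth_add_dist i k
  omega

lemma isAncestor_of_dist {i k : ℕ+} (h : depth i + GcZ2.dist i k = depth k) :
    IsAncestor i k := by
  obtain ⟨W, hW⟩ := (preconnected i k).exists_walk_length_eq_dist
  exact isAncestor_of_length W (hW ▸ h)

lemma dist_one (v : ℕ+) : GcZ2.dist 1 v = depth v := by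
  have h := depth_add_dist_of_isAncestor (i := 1) ⟨depth v, parent_iterate_depth v.pos, by
    simp [depth_of_lt_two]⟩
  simpa [depth_of_lt_two] using h

lemma liesOnPathFromOne_iff {i k : ℕ+} : liesOnPathFromOne i k ↔ IsAncestor i k := by
  rw [liesOnPathFromOne, dist_one, dist_one]
  exact ⟨isAncestor_of_dist, depth_add_dist_of_isAncestor⟩

lemma IsAncestor.eq_parent_iterate {i k : ℕ} (h : IsAncestor i k) :
    i = parent^[depth k - depth i] k := by
  obtain ⟨d, rfl, hdepth⟩ := h
  rw [show depth k - depth (parent^[d] k) = d by omega]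

lemma maxChild_iterate_lt {i k d : ℕ} (hk : parent^[d + 1] k = i)
    (hd : depth i + (d + 1) = depth k) : maxChild^[d] i < k := by
  have hk2 := two_le_of_depth_pos (show 0 < depth k by omega)
  induction d generalizing k with
  | zero => exact hk ▸ parent_lt hk2
  | succ d ih =>
    have := depth_of_two_le hk2
    have hm := ih (k := parent k) (by rwa [← iterate_succ_apply]) (by omega)
      (two_le_of_depth_pos (by omega))
    rw [iterate_succ_apply']
    exact (maxChild_mono (Nat.le_sub_one_of_lt hm)).trans_lt (maxChild_parent_sub_one_lt hk2)

lemma le_maxChild_iterate_three {i j : ℕ} (hi : 1 ≤ i) (hij : i < j)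
    (hadj : latticeZ2.Adj (spiral (i - 1)) (spiral (j - 1))) : j ≤ maxChild^[3] i + 1 := by
  have hgap := sq_spiralIndex_sub_le hadj (by simp only [spiralIndex_spiral]; omega)
  simp only [spiralIndex_spiral] at hgap
  have hg : (j - i - 1) ^ 2 ≤ 36 * i := by
    zify [hij.le, show 1 ≤ j - i by omega, hi, show 1 ≤ j by omega] at hgap ⊢
    convert hgap using 2 <;> ring
  set B := maxChild i
  set C := maxChild B
  have hB : i < B := lt_maxChild i
  have hC : B < C := lt_maxChild B
  have := le_add_add_of_sq_le hg (four_mul_le_isoNum_latticeZ2_sq i)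
    ((Nat.mul_le_mul_left 4 hB.le).trans (four_mul_le_isoNum_latticeZ2_sq B))
    ((Nat.mul_le_mul_left 4 (hB.trans hC).le).trans (four_mul_le_isoNum_latticeZ2_sq C))
  have e₁ : B = i + isoNum latticeZ2 i := maxChild_of_pos hi
  have e₂ : C = B + isoNum latticeZ2 B := maxChild_of_pos (by omega)
  have e₃ : maxChild C = C + isoNum latticeZ2 C := maxChild_of_pos (by omega)
  change j ≤ maxChild C + 1
  omega

lemma depth_le_of_isLeast {i j k : ℕ+}
    (hk : IsLeast {k' : ℕ+ | j ≤ k' ∧ liesOnPathFromOne i k'} k)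
    (hj : (j : ℕ) ≤ maxChild^[3] i + 1) : depth k ≤ depth i + 4 := by
  obtain ⟨⟨-, hik⟩, hmin⟩ := hk
  obtain ⟨d, hd, hdepth⟩ := liesOnPathFromOne_iff.1 hik
  by_contra! hdk
  obtain ⟨e, rfl⟩ : ∃ e, d = e + 3 + 2 := ⟨d - 5, by omega⟩
  have hk2 := two_le_of_depth_pos (show 0 < depth k by omega)
  obtain ⟨u, hu, -⟩ := exists_adj_parent hk2
  have := depth_of_two_le hk2
  rw [← hu] at this
  have hui : parent^[e + 3 + 1] u = i := by rwa [hu, ← iterate_succ_apply]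
  have hiu : depth i + (e + 3 + 1) = depth u := by omega
  have hlt := maxChild_iterate_lt hui hiu
  have hmono : maxChild^[3] i ≤ maxChild^[e + 3] i :=
    monotone_iterate_of_id_le (fun n => (lt_maxChild n).le) (show 3 ≤ e + 3 by omega) i
  have hku : k ≤ u := hmin ⟨by rw [← PNat.coe_le_coe]; omega,
    liesOnPathFromOne_iff.2 ⟨_, hui, hiu⟩⟩
  have := parent_lt hk2
  rw [← PNat.coe_le_coe] at hku
  omega

lemma isAncestor_of_edgeOnPath {i k a b : ℕ+} (hik : liesOnPathFromOne i k)
    (hab : 2 ≤ (b : ℕ) ∧ parent b = a) (h : edgeOnPath i k a b) :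
    IsAncestor i a ∧ depth a < depth k := by
  have hk := depth_add_dist_of_isAncestor (liesOnPathFromOne_iff.1 hik)
  have hb := depth_of_two_le hab.1
  rw [hab.2] at hb
  have := depth_le_depth_add_dist i a
  have := depth_le_depth_add_dist i b
  have := depth_le_depth_add_dist a k
  have := depth_le_depth_add_dist b k
  rcases h.2 with h | h
  · exact ⟨isAncestor_of_dist (by omega), by omega⟩
  · omega

lemma exists_isAncestor_of_edgeOnPath {a b : ℕ+} (hab : GcZ2.Adj a b) :
    ∃ x : ℕ+, ∀ i k : ℕ+, liesOnPathFromOne i k → edgeOnPath i k a b →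
      IsAncestor i x ∧ depth x < depth k := by
  rcases adj_iff.1 hab with h | h
  · exact ⟨a, fun i k hik he => isAncestor_of_edgeOnPath hik h he⟩
  · exact ⟨b, fun i k hik he => isAncestor_of_edgeOnPath hik h ⟨he.1.symm, he.2.symm⟩⟩

end GcZ2

open GcZ2

/-- **Lemma (bounded multiplicity of `Ψ`).**  Identify `ℤ²` with `ℕ_{≥1}` via the spiral
labelling.  For every edge `{a, b}` of the universal comparison graph `G_c`, there are at
most `16` edges `(i, j)` of the lattice graph (with spiral labels `i < j`) such that
`{a, b}` lies on the path `Ψ(i, j)`, i.e. on the shortest path in `G_c` from `i` to the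
smallest `k ≥ j` for which `i` lies on the path from `1` to `k`. -/
theorem Psi_bounded_multiplicity (a b : ℕ+) (hab : GcZ2.Adj a b) :
    {q : ℕ+ × ℕ+ | q.1 < q.2
      ∧ latticeZ2.Adj (spiral ((q.1 : ℕ) - 1)) (spiral ((q.2 : ℕ) - 1))
      ∧ ∃ k : ℕ+, IsLeast {k' : ℕ+ | q.2 ≤ k' ∧ liesOnPathFromOne q.1 k'} k
          ∧ edgeOnPath q.1 k a b}.encard ≤ 16 := by
  obtain ⟨x, hx⟩ := exists_isAncestor_of_edgeOnPath hab
  have hcard : (↑(range 4 ×ˢ unitSteps) : Set (ℕ × (ℤ × ℤ))).encard = 16 := by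
    rw [Set.encard_coe_eq_coe_finsetCard]; rfl
  refine hcard ▸ Set.encard_le_encard_of_injOn
    (f := fun q => (depth x - depth q.1, spiral (q.2 - 1) - spiral (q.1 - 1))) ?_ ?_
  · rintro ⟨i, j⟩ ⟨hij, hadj, k, hk, he⟩
    have := depth_le_of_isLeast hk (le_maxChild_iterate_three i.pos hij hadj)
    have := (hx i k hk.1.2 he).2
    refine mem_product.2 ⟨mem_range.2 ?_, latticeZ2_adj_iff.1 hadj⟩
    dsimp only at *
    omega
  · rintro ⟨i₁, j₁⟩ ⟨-, -, k₁, hk₁, he₁⟩ ⟨i₂, j₂⟩ ⟨-, -, k₂, hk₂, he₂⟩ hf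
    simp only [Prod.mk.injEq] at hf
    obtain rfl : i₁ = i₂ := PNat.coe_injective <| by
      rw [(hx _ _ hk₁.1.2 he₁).1.eq_parent_iterate, (hx _ _ hk₂.1.2 he₂).1.eq_parent_iterate,
        hf.1]
    have := spiral_injective (sub_left_inj.1 hf.2)
    rw [PNat.coe_injective (by have := j₁.pos; have := j₂.pos; omega : (j₁ : ℕ) = j₂)]
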